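/- Let G be a group and ρ: G → GL_n(ℂ) a representation such that the trace of ρ(g) takes only finitely many values as g ranges over G, and such that ρ is irreducible. Then the image ρ(G) is finite. -/
import Mathlib

open Matrix Submodule

namespace Stmt0Aux

variable {G : Type*} [Group G] {n : ℕ}

/-- right "evaluation at x" as a linear map on matrices -/
noncomputable def evalL (x : Fin n → ℂ) : Matrix (Fin n) (Fin n) ℂ →ₗ[ℂ] (Fin n → ℂ) where
  toFun a := a.mulVec x
  map_add' a b := Matrix.add_mulVec a b x
  map_smul' c a := Matrix.smul_mulVec c a x

@[simp] lemma evalL_apply (x : Fin n → ℂ) (a : Matrix (Fin n) (Fin n) ℂ) :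
    evalL x a = a.mulVec x := rfl

variable (ρ : G →* GL (Fin n) ℂ)

/-- span of the image of ρ -/
noncomputable def P : Submodule ℂ (Matrix (Fin n) (Fin n) ℂ) :=
  Submodule.span ℂ (Set.range fun g => ((ρ g : Matrix (Fin n) (Fin n) ℂ)))

lemma mem_P (g : G) : ((ρ g : Matrix (Fin n) (Fin n) ℂ)) ∈ P ρ :=
  Submodule.subset_span ⟨g, rfl⟩

lemma one_mem_P : (1 : Matrix (Fin n) (Fin n) ℂ) ∈ P ρ := by
  have := mem_P ρ 1
  simpa using this

lemma mul_mem_P (g : G) {a : Matrix (Fin n) (Fin n) ℂ} (ha : a ∈ P ρ) :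
    ((ρ g : Matrix (Fin n) (Fin n) ℂ)) * a ∈ P ρ := by
  induction ha using Submodule.span_induction with
  | mem x hx =>
      obtain ⟨h, rfl⟩ := hx
      have : ((ρ g : Matrix (Fin n) (Fin n) ℂ)) * (ρ h : Matrix (Fin n) (Fin n) ℂ)
          = ((ρ (g * h) : Matrix (Fin n) (Fin n) ℂ)) := by
        rw [_root_.map_mul]; rfl
      rw [this]; exact mem_P ρ _
  | zero => simpa using (P ρ).zero_mem
  | add x y _ _ hx hy => rw [mul_add]; exact (P ρ).add_mem hx hy
  | smul c x _ hx => rw [mul_smul_comm]; exact (P ρ).smul_mem c hx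

variable (hirr : ∀ W : Submodule ℂ (Fin n → ℂ),
      (∀ g : G, ∀ v ∈ W, Matrix.mulVec (ρ g : Matrix (Fin n) (Fin n) ℂ) v ∈ W) →
      W = ⊥ ∨ W = ⊤)

include hirr

/-- Schur's lemma -/
lemma schur [Nontrivial (Fin n → ℂ)] (T : (Fin n → ℂ) →ₗ[ℂ] (Fin n → ℂ))
    (hT : ∀ (g : G) v, T ((ρ g : Matrix (Fin n) (Fin n) ℂ).mulVec v)
      = (ρ g : Matrix (Fin n) (Fin n) ℂ).mulVec (T v)) :
    ∃ c : ℂ, ∀ v, T v = c • v := by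
  obtain ⟨c, hc⟩ := Module.End.exists_eigenvalue (T : Module.End ℂ (Fin n → ℂ))
  refine ⟨c, ?_⟩
  have hstab : ∀ g : G, ∀ v ∈ Module.End.eigenspace (T : Module.End ℂ (Fin n → ℂ)) c,
      (ρ g : Matrix (Fin n) (Fin n) ℂ).mulVec v
        ∈ Module.End.eigenspace (T : Module.End ℂ (Fin n → ℂ)) c := by
    intro g v hv
    rw [Module.End.mem_eigenspace_iff] at hv ⊢
    show T _ = _
    rw [hT g v, hv, Matrix.mulVec_smul]
  rcases hirr _ hstab with hW | hW
  · exact absurd hW hc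
  · intro v
    have : v ∈ Module.End.eigenspace (T : Module.End ℂ (Fin n → ℂ)) c := hW ▸ trivial
    exact Module.End.mem_eigenspace_iff.mp this

/-- Jacobson density / Burnside, by induction -/
lemma density [Nontrivial (Fin n → ℂ)] (k : ℕ) :
    ∀ x : Fin k → (Fin n → ℂ), LinearIndependent ℂ x →
      ∀ y : Fin k → (Fin n → ℂ), ∃ a ∈ P ρ, ∀ i, a.mulVec (x i) = y i := by
  induction k with
  | zero => intro x _ y; exact ⟨1, one_mem_P ρ, fun i => i.elim0⟩
  | succ k ih =>
    intro x hx y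
    set xc : Fin k → (Fin n → ℂ) := fun i => x i.castSucc with hxc
    have hxci : LinearIndependent ℂ xc :=
      hx.comp Fin.castSucc (Fin.castSucc_injective k)
    set xl := x (Fin.last k) with hxl
    -- key: exists b in P killing all xc but not xl
    have key : ∃ b ∈ P ρ, (∀ i, b.mulVec (xc i) = 0) ∧ b.mulVec xl ≠ 0 := by
      by_contra hcon
      push_neg at hcon
      have hcon' : ∀ b ∈ P ρ, (∀ i, b.mulVec (xc i) = 0) → b.mulVec xl = 0 := by
        intro b hb h0
        by_contra hne
        exact hne (hcon b hb h0)
      have choice : ∀ (i : Fin k) (v : Fin n → ℂ), ∃ a ∈ P ρ,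
          ∀ j, a.mulVec (xc j) = if j = i then v else 0 :=
        fun i v => ih xc hxci (fun j => if j = i then v else 0)
      choose A hA1 hA2 using choice
      -- well-definedness
      have wd : ∀ (a a' : Matrix (Fin n) (Fin n) ℂ), a ∈ P ρ → a' ∈ P ρ →
          (∀ j, a.mulVec (xc j) = a'.mulVec (xc j)) → a.mulVec xl = a'.mulVec xl := by
        intro a a' ha ha' hj
        have h1 : (a - a').mulVec xl = 0 := by
          refine hcon' _ ((P ρ).sub_mem ha ha') fun j => ?_
          rw [Matrix.sub_mulVec, hj j, sub_self]
        rw [Matrix.sub_mulVec] at h1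
        exact sub_eq_zero.mp h1
      -- each slot map is G-equivariant, hence scalar
      have Tlin : ∀ i : Fin k, ∃ c : ℂ, ∀ v, (A i v).mulVec xl = c • v := by
        intro i
        set T : (Fin n → ℂ) →ₗ[ℂ] (Fin n → ℂ) :=
          { toFun := fun v => (A i v).mulVec xl
            map_add' := by
              intro v w
              have h1 : (A i (v + w)).mulVec xl = (A i v + A i w).mulVec xl := by
                refine wd _ _ (hA1 i (v + w)) ((P ρ).add_mem (hA1 i v) (hA1 i w))
                  fun j => ?_
                rw [Matrix.add_mulVec, hA2, hA2, hA2]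
                by_cases h : j = i <;> simp [h]
              show A i (v + w) *ᵥ xl = A i v *ᵥ xl + A i w *ᵥ xl
              rw [h1, Matrix.add_mulVec]
            map_smul' := by
              intro c v
              have h1 : (A i (c • v)).mulVec xl = (c • A i v).mulVec xl := by
                refine wd _ _ (hA1 i (c • v)) ((P ρ).smul_mem c (hA1 i v)) fun j => ?_
                rw [Matrix.smul_mulVec, hA2, hA2]
                by_cases h : j = i <;> simp [h]
              show A i (c • v) *ᵥ xl = c • (A i v *ᵥ xl)
              rw [h1, Matrix.smul_mulVec] } with hTdef
        have hcomm : ∀ (g : G) v, T ((ρ g : Matrix (Fin n) (Fin n) ℂ).mulVec v)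
            = (ρ g : Matrix (Fin n) (Fin n) ℂ).mulVec (T v) := by
          intro g v
          show (A i ((ρ g : Matrix (Fin n) (Fin n) ℂ).mulVec v)).mulVec xl
            = (ρ g : Matrix (Fin n) (Fin n) ℂ).mulVec ((A i v).mulVec xl)
          have h1 : (A i ((ρ g : Matrix (Fin n) (Fin n) ℂ).mulVec v)).mulVec xl
              = ((ρ g : Matrix (Fin n) (Fin n) ℂ) * A i v).mulVec xl := by
            refine wd _ _ (hA1 _ _) (mul_mem_P ρ g (hA1 i v)) fun j => ?_
            rw [← Matrix.mulVec_mulVec, hA2, hA2]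
            by_cases h : j = i <;> simp [h]
          rw [h1, ← Matrix.mulVec_mulVec]
        exact schur ρ hirr T hcomm
      choose lam hlam using Tlin
      -- every a in P kills xl - ∑ lam i • xc i
      have hfin : ∀ a ∈ P ρ, a.mulVec xl = a.mulVec (∑ i, lam i • xc i) := by
        intro a haP
        set s : Matrix (Fin n) (Fin n) ℂ := ∑ i, A i (a.mulVec (xc i)) with hs
        have hsP : s ∈ P ρ := Submodule.sum_mem _ fun i _ => hA1 _ _
        have h1 : a.mulVec xl = s.mulVec xl := by
          refine wd _ _ haP hsP fun j => ?_
          have hms := map_sum (evalL (xc j)) (fun i => A i (a.mulVec (xc i))) Finset.univ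
          simp only [evalL_apply] at hms
          rw [hs, hms]
          rw [Finset.sum_congr rfl (fun i _ => hA2 i (a.mulVec (xc i)) j)]
          simp
        have h2 : s.mulVec xl = ∑ i, lam i • a.mulVec (xc i) := by
          have hms := map_sum (evalL xl) (fun i => A i (a.mulVec (xc i))) Finset.univ
          simp only [evalL_apply] at hms
          rw [hs, hms]
          exact Finset.sum_congr rfl fun i _ => hlam i _
        have h3 := map_sum a.mulVecLin (fun i => lam i • xc i) Finset.univ
        simp only [Matrix.mulVecLin_apply] at h3
        rw [h1, h2, h3]
        exact Finset.sum_congr rfl fun i _ => (Matrix.mulVec_smul a (lam i) (xc i)).symm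
      have hone := hfin 1 (one_mem_P ρ)
      rw [Matrix.one_mulVec, Matrix.one_mulVec] at hone
      -- contradiction with linear independence
      have hdep : ∑ j, (Fin.snoc lam (-1 : ℂ) : Fin (k + 1) → ℂ) j • x j = 0 := by
        rw [Fin.sum_univ_castSucc]
        simp only [Fin.snoc_castSucc, Fin.snoc_last, neg_one_smul]
        rw [show ∑ i : Fin k, lam i • x (Fin.castSucc i) = x (Fin.last k) from hone.symm]
        abel
      have := Fintype.linearIndependent_iff.mp hx _ hdep (Fin.last k)
      simp at this
    obtain ⟨b, hbP, hb0, hbne⟩ := key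
    set I : Submodule ℂ (Matrix (Fin n) (Fin n) ℂ) :=
      P ρ ⊓ ⨅ i : Fin k, LinearMap.ker (evalL (xc i)) with hI
    set W : Submodule ℂ (Fin n → ℂ) := Submodule.map (evalL xl) I with hW
    have hstab : ∀ g : G, ∀ v ∈ W, (ρ g : Matrix (Fin n) (Fin n) ℂ).mulVec v ∈ W := by
      rintro g v ⟨a, ⟨haP, haK⟩, rfl⟩
      refine ⟨(ρ g : Matrix (Fin n) (Fin n) ℂ) * a, ⟨mul_mem_P ρ g haP, ?_⟩, ?_⟩
      · simp only [SetLike.mem_coe, Submodule.mem_iInf, LinearMap.mem_ker, evalL_apply]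
          at haK ⊢
        intro i
        rw [← Matrix.mulVec_mulVec, haK i, Matrix.mulVec_zero]
      · simp only [evalL_apply]
        rw [← Matrix.mulVec_mulVec]
    have hWtop : W = ⊤ := by
      rcases hirr W hstab with h | h
      · exfalso
        apply hbne
        have hbW : b.mulVec xl ∈ W := by
          refine ⟨b, ⟨hbP, ?_⟩, rfl⟩
          simp only [SetLike.mem_coe, Submodule.mem_iInf, LinearMap.mem_ker, evalL_apply]
          exact hb0
        rw [h] at hbW
        exact (Submodule.mem_bot ℂ).mp hbW
      · exact h
    obtain ⟨a0, ha0P, ha0⟩ := ih xc hxci (fun i => y i.castSucc)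
    have hmem : y (Fin.last k) - a0.mulVec xl ∈ W := hWtop ▸ trivial
    obtain ⟨c, hcI, hcv⟩ := hmem
    obtain ⟨hcP, hcK⟩ := hcI
    simp only [SetLike.mem_coe, Submodule.mem_iInf, LinearMap.mem_ker, evalL_apply] at hcK
    simp only [evalL_apply] at hcv
    refine ⟨a0 + c, (P ρ).add_mem ha0P hcP, fun i => ?_⟩
    refine Fin.lastCases ?_ ?_ i
    · rw [Matrix.add_mulVec, ← hxl, hcv]
      abel
    · intro j
      rw [Matrix.add_mulVec]
      have h1 := hcK j
      rw [show x j.castSucc = xc j from rfl, h1, ha0 j, add_zero]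

lemma span_top [Nontrivial (Fin n → ℂ)] : P ρ = ⊤ := by
  refine eq_top_iff.mpr fun m _ => ?_
  obtain ⟨a, haP, ha⟩ := density ρ hirr n (⇑(Pi.basisFun ℂ (Fin n)))
    (Pi.basisFun ℂ (Fin n)).linearIndependent
    (fun i => m.mulVec (Pi.basisFun ℂ (Fin n) i))
  have h2 : Matrix.toLin' a = Matrix.toLin' m := by
    refine Module.Basis.ext (Pi.basisFun ℂ (Fin n)) fun i => ?_
    rw [Matrix.toLin'_apply, Matrix.toLin'_apply]
    exact ha i
  have h3 : a = m := Matrix.toLin'.injective h2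
  exact h3 ▸ haP

omit hirr in
lemma trace_std (A : Matrix (Fin n) (Fin n) ℂ) (i j : Fin n) :
    Matrix.trace (Matrix.single i j 1 * A) = A j i := by
  simp [Matrix.trace, Matrix.diag, Matrix.mul_apply, Matrix.single,
    Finset.sum_ite_eq, ite_and]

end Stmt0Aux

/-- If `ρ : G → GL_n(ℂ)` is an irreducible representation whose traces take
only finitely many values, then the image of `ρ` is finite. -/
theorem stmt0 {G : Type*} [Group G] {n : ℕ} (ρ : G →* GL (Fin n) ℂ)
    (htr : Set.Finite {t : ℂ | ∃ g : G, Matrix.trace ((ρ g : Matrix (Fin n) (Fin n) ℂ)) = t})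
    (hirr : ∀ W : Submodule ℂ (Fin n → ℂ),
      (∀ g : G, ∀ v ∈ W, Matrix.mulVec (ρ g : Matrix (Fin n) (Fin n) ℂ) v ∈ W) →
      W = ⊥ ∨ W = ⊤) :
    Set.Finite (Set.range ρ) := by
  classical
  rcases Nat.eq_zero_or_pos n with hn | hn
  · subst hn
    haveI : Subsingleton (GL (Fin 0) ℂ) := ⟨fun a b => Units.ext (Subsingleton.elim _ _)⟩
    haveI := Finite.of_subsingleton (α := GL (Fin 0) ℂ)
    exact (Set.range ρ).toFinite
  · haveI : Nontrivial (Fin n → ℂ) := by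
      refine ⟨Pi.single ⟨0, hn⟩ 1, 0, fun h => ?_⟩
      have := congrFun h ⟨0, hn⟩
      simp [Pi.single_eq_same] at this
    obtain ⟨b, hbS, hbspan, hbind⟩ := exists_linearIndependent ℂ
      (Set.range fun g => ((ρ g : Matrix (Fin n) (Fin n) ℂ)))
    have hbfin : b.Finite := hbind.setFinite
    have hspan : Submodule.span ℂ b = ⊤ := by
      rw [hbspan]
      exact Stmt0Aux.span_top ρ hirr
    haveI := hbfin.to_subtype
    haveI := htr.to_subtype
    have hmemT : ∀ (B : ↥b) (u : ↥(Set.range ρ)),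
        Matrix.trace ((B : Matrix (Fin n) (Fin n) ℂ)
          * ((u : GL (Fin n) ℂ) : Matrix (Fin n) (Fin n) ℂ))
          ∈ {t : ℂ | ∃ g : G, Matrix.trace ((ρ g : Matrix (Fin n) (Fin n) ℂ)) = t} := by
      rintro ⟨B, hB⟩ ⟨u, hu⟩
      obtain ⟨h, hh⟩ := hbS hB
      obtain ⟨g, hg⟩ := hu
      refine ⟨h * g, ?_⟩
      have hmul : ((ρ (h * g) : GL (Fin n) ℂ) : Matrix (Fin n) (Fin n) ℂ)
          = B * ((u : GL (Fin n) ℂ) : Matrix (Fin n) (Fin n) ℂ) := by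
        rw [_root_.map_mul, Units.val_mul, hg]
        exact congrArg (· * ((u : GL (Fin n) ℂ) : Matrix (Fin n) (Fin n) ℂ)) hh
      rw [hmul]
    set f : ↥(Set.range ρ) →
        (↥b → ↥{t : ℂ | ∃ g : G, Matrix.trace ((ρ g : Matrix (Fin n) (Fin n) ℂ)) = t}) :=
      fun u B => ⟨_, hmemT B u⟩ with hf
    have hfinj : Function.Injective f := by
      intro u u' huu
      have hBt : ∀ B ∈ b, Matrix.trace (B * ((u : GL (Fin n) ℂ) : Matrix (Fin n) (Fin n) ℂ))
          = Matrix.trace (B * ((u' : GL (Fin n) ℂ) : Matrix (Fin n) (Fin n) ℂ)) := by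
        intro B hB
        exact congrArg Subtype.val (congrFun huu ⟨B, hB⟩)
      have hall : ∀ m : Matrix (Fin n) (Fin n) ℂ,
          Matrix.trace (m * ((u : GL (Fin n) ℂ) : Matrix (Fin n) (Fin n) ℂ))
          = Matrix.trace (m * ((u' : GL (Fin n) ℂ) : Matrix (Fin n) (Fin n) ℂ)) := by
        intro m
        have hm : m ∈ Submodule.span ℂ b := hspan ▸ trivial
        induction hm using Submodule.span_induction with
        | mem B hB => exact hBt B hB
        | zero => simp
        | add p q _ _ hp hq =>
            rw [add_mul, add_mul, Matrix.trace_add, Matrix.trace_add, hp, hq]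
        | smul c p _ hp =>
            rw [smul_mul_assoc, Matrix.trace_smul, hp, ← Matrix.trace_smul, ← smul_mul_assoc]
      have hmat : ((u : GL (Fin n) ℂ) : Matrix (Fin n) (Fin n) ℂ)
          = ((u' : GL (Fin n) ℂ) : Matrix (Fin n) (Fin n) ℂ) := by
        ext i j
        have h4 := hall (Matrix.single j i 1)
        rw [Stmt0Aux.trace_std, Stmt0Aux.trace_std] at h4
        exact h4
      exact Subtype.ext (Units.ext hmat)
    haveI : Finite ↥(Set.range ρ) := Finite.of_injective f hfinj
    exact Set.toFinite _
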